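/- Let Γ ⊆ ℝ³ be the closed curve Γ = {(cos t, sin t, t) : t ∈ [0, 2π]} ∪ {(1, 0, s) : s ∈ [0, 2π]}. Then Γ contains exactly one inscribed rhombus: the points y₁ = (0, 1, π/2), y₂ = (−1, 0, π), y₃ = (0, −1, 3π/2), y₄ = (1, 0, π) are consecutive vertices of a rhombus, and every 4-tuple of pairwise distinct points of Γ forming the consecutive vertices of a rhombus has {y₁, y₂, y₃, y₄} = {(0,1,π/2), (−1,0,π), (0,−1,3π/2), (1,0,π)} as its vertex set. -/

import Mathlib

open Real

noncomputable section

/-- One full turn of the unit helix. -/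
def helix (t : ℝ) : EuclideanSpace ℝ (Fin 3) := !₂[Real.cos t, Real.sin t, t]

/-- The vertical segment joining the endpoints of one turn of the helix. -/
def vseg (s : ℝ) : EuclideanSpace ℝ (Fin 3) := !₂[1, 0, s]

/-- The closed curve obtained as the union of one turn of the helix and the vertical
segment joining its endpoints. -/
def helixCurve : Set (EuclideanSpace ℝ (Fin 3)) :=
  helix '' Set.Icc 0 (2 * π) ∪ vseg '' Set.Icc 0 (2 * π)

/-- `y₁, y₂, y₃, y₄` are the consecutive vertices of a rhombus. -/
def IsRhombus (y₁ y₂ y₃ y₄ : EuclideanSpace ℝ (Fin 3)) : Prop :=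
  y₁ ≠ y₂ ∧ y₁ ≠ y₃ ∧ y₁ ≠ y₄ ∧ y₂ ≠ y₃ ∧ y₂ ≠ y₄ ∧ y₃ ≠ y₄ ∧
  y₁ + y₃ = y₂ + y₄ ∧ ‖y₁ - y₂‖ = ‖y₂ - y₃‖


/-!
Project to the horizontal plane. The vertices go to four points `pᵢ` of the unit circle with
`p₁ + p₃ = p₂ + p₄`, and a rhombus is a parallelogram with orthogonal diagonals. If the projected
diagonals are not both diameters, two vertices share their projection, which puts all four on the
vertical segment, where the diagonals cannot be orthogonal. Otherwise each diagonal joins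
antipodal projections: either two helix points at heights `t` and `t + π`, or a point of the
segment and `(-1, 0, π)`. Two helix diagonals have vertical parts of product `±π²`, which the
horizontal parts (of product at most `4`) cannot cancel; two segment diagonals share a vertex.
In the mixed case the midpoint and orthogonality conditions reduce to `4 cos t = π (2t - π)`,
whose only root is `t = π / 2` since `cos` is `1`-Lipschitz.
-/

open scoped RealInnerProductSpace ComplexConjugate

local notation "ℝ³" => EuclideanSpace ℝ (Fin 3)

theorem norm_sub_eq_norm_sub_iff_inner_eq_zero {E : Type*} [NormedAddCommGroup E]
    [InnerProductSpace ℝ E] {a b c d : E} (h : a + c = b + d) :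
    ‖a - b‖ = ‖b - c‖ ↔ ⟪a - c, b - d⟫ = 0 := by
  obtain rfl := eq_sub_of_add_eq' h.symm
  rw [InnerProductGeometry.inner_eq_zero_iff_angle_eq_pi_div_two,
    ← InnerProductGeometry.norm_add_eq_norm_sub_iff_angle_eq_pi_div_two,
    show a - c + (b - (a + c - b)) = (2 : ℝ) • (b - c) by module,
    show a - c - (b - (a + c - b)) = (2 : ℝ) • (a - b) by module, norm_smul, norm_smul,
    mul_right_inj' (by norm_num), eq_comm]

/-- Since `conj p = p⁻¹` on the unit circle, `p₁ + p₃ = p₂ + p₄ ≠ 0` forces `p₁ p₃ = p₂ p₄`, so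
both pairs are the roots of the same quadratic. -/
theorem Complex.add_eq_zero_or_of_add_eq_add {p₁ p₂ p₃ p₄ : ℂ} (h₁ : ‖p₁‖ = 1)
    (h₂ : ‖p₂‖ = 1) (h₃ : ‖p₃‖ = 1) (h₄ : ‖p₄‖ = 1) (h : p₁ + p₃ = p₂ + p₄) :
    p₁ + p₃ = 0 ∨ (p₂ = p₁ ∧ p₄ = p₃) ∨ (p₂ = p₃ ∧ p₄ = p₁) := by
  have hinv : p₁⁻¹ + p₃⁻¹ = p₂⁻¹ + p₄⁻¹ := by
    simpa only [Complex.inv_eq_conj, h₁, h₂, h₃, h₄, map_add] using congrArg conj h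
  have hne : ∀ {p : ℂ}, ‖p‖ = 1 → p ≠ 0 := fun hp h0 => by simp [h0] at hp
  field_simp [hne h₁, hne h₂, hne h₃, hne h₄] at hinv
  by_cases hσ : p₁ + p₃ = 0
  · exact Or.inl hσ
  have hprod : p₁ * p₃ = p₂ * p₄ :=
    mul_left_cancel₀ hσ (by linear_combination -hinv + p₁ * p₃ * h)
  have hroot : (p₂ - p₁) * (p₂ - p₃) = 0 := by linear_combination -p₂ * h + hprod
  rcases mul_eq_zero.1 hroot with h' | h' <;> rw [sub_eq_zero] at h' <;> subst h'
  · exact Or.inr (Or.inl ⟨rfl, by linear_combination -h⟩)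
  · exact Or.inr (Or.inr ⟨rfl, by linear_combination -h⟩)

theorem eq_pi_div_two_of_four_mul_cos_eq {t : ℝ} (h : 4 * cos t = π * (2 * t - π)) :
    t = π / 2 := by
  have hlip := abs_cos_sub_cos_le t (π / 2)
  rw [cos_pi_div_two, sub_zero] at hlip
  have hle : 2 * π * |t - π / 2| ≤ 4 * |t - π / 2| :=
    calc 2 * π * |t - π / 2| = |4 * cos t| := by
          rw [h, show π * (2 * t - π) = 2 * π * (t - π / 2) by ring, abs_mul,
            abs_of_pos (by positivity : (0 : ℝ) < 2 * π)]
      _ ≤ 4 * |t - π / 2| := by rw [abs_mul, abs_of_pos four_pos]; gcongr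
  have hzero : |t - π / 2| = 0 := by nlinarith [abs_nonneg (t - π / 2), pi_gt_three]
  linarith [abs_eq_zero.1 hzero]

theorem inner_fin_three (x y : ℝ³) : ⟪x, y⟫ = x 0 * y 0 + x 1 * y 1 + x 2 * y 2 := by
  simp only [PiLp.inner_apply, Fin.sum_univ_three, RCLike.inner_apply, conj_trivial]
  ring

def horizProj (z : ℝ³) : ℂ := ⟨z 0, z 1⟩

@[simp]
theorem horizProj_helix (t : ℝ) : horizProj (helix t) = ⟨cos t, sin t⟩ := by
  simp [horizProj, helix]

@[simp]
theorem horizProj_vseg (s : ℝ) : horizProj (vseg s) = 1 := by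
  simp [horizProj, vseg, Complex.ext_iff]

theorem horizProj_add (z w : ℝ³) : horizProj (z + w) = horizProj z + horizProj w := by
  simp [horizProj, Complex.ext_iff]

theorem horizProj_helix_add_pi (t : ℝ) : horizProj (helix (t + π)) = -horizProj (helix t) := by
  simp [Complex.ext_iff, cos_add_pi, sin_add_pi]

theorem norm_horizProj_of_mem {z : ℝ³} (hz : z ∈ helixCurve) : ‖horizProj z‖ = 1 := by
  rcases hz with ⟨t, -, rfl⟩ | ⟨s, -, rfl⟩
  · simp [Complex.norm_eq_sqrt_sq_add_sq]
  · simp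

theorem eq_vseg_of_horizProj_eq_one {z : ℝ³} (h : horizProj z = 1) : z = vseg (z 2) := by
  simp only [horizProj, Complex.ext_iff, Complex.one_re, Complex.one_im] at h
  ext i; fin_cases i <;> simp [vseg, h]

theorem cos_sub_eq_one_of_horizProj_helix_eq {a b : ℝ}
    (h : horizProj (helix a) = horizProj (helix b)) : cos (a - b) = 1 := by
  simp only [horizProj_helix, Complex.mk.injEq] at h
  rw [cos_sub, h.1, h.2, ← sq, ← sq, cos_sq_add_sin_sq]

theorem eq_add_pi_of_horizProj_helix_add_eq_zero {a b : ℝ} (hab : a ≤ b) (hba : b ≤ a + 2 * π)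
    (h : horizProj (helix a) + horizProj (helix b) = 0) : b = a + π := by
  rw [add_eq_zero_iff_eq_neg', ← horizProj_helix_add_pi] at h
  have := cos_sub_eq_one_of_horizProj_helix_eq h
  have := (cos_eq_one_iff_of_lt_of_lt (by linarith [pi_pos]) (by linarith [pi_pos])).1 this
  linarith

theorem eq_helix_pi_of_horizProj_eq_neg_one {z : ℝ³} (hz : z ∈ helixCurve)
    (h : horizProj z = -1) : z = helix π := by
  rcases hz with ⟨t, ⟨ht₀, ht₁⟩, rfl⟩ | ⟨s, -, rfl⟩
  · have h₀ : horizProj (helix 0) + horizProj (helix t) = 0 := by simp [h, Complex.ext_iff]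
    rw [eq_add_pi_of_horizProj_helix_add_eq_zero ht₀ (by linarith) h₀, zero_add]
  · norm_num [Complex.ext_iff] at h

theorem horizProj_eq_one_of_horizProj_eq {z w : ℝ³} (hz : z ∈ helixCurve) (hw : w ∈ helixCurve)
    (h : horizProj z = horizProj w) (hne : z ≠ w) : horizProj z = 1 := by
  rcases hz with ⟨a, ⟨ha₀, ha₁⟩, rfl⟩ | ⟨a, -, rfl⟩
  · rcases hw with ⟨b, ⟨hb₀, hb₁⟩, rfl⟩ | ⟨b, -, rfl⟩
    · by_cases hend : a = 0 ∨ a = 2 * π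
      · rcases hend with rfl | rfl <;> simp [Complex.ext_iff]
      have := cos_sub_eq_one_of_horizProj_helix_eq h
      have := (cos_eq_one_iff_of_lt_of_lt (by grind) (by grind)).1 this
      exact absurd (congrArg helix (sub_eq_zero.1 this)) hne
    · simpa using h
  · simp

theorem inner_vseg_sub_vseg (a b c d : ℝ) :
    ⟪vseg a - vseg c, vseg b - vseg d⟫ = (a - c) * (b - d) := by
  simp only [inner_fin_three, PiLp.sub_apply, vseg, Matrix.cons_val]
  ring

theorem inner_sub_ne_zero_of_horizProj_eq {z₁ z₂ z₃ z₄ : ℝ³} (h₁ : z₁ ∈ helixCurve)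
    (h₂ : z₂ ∈ helixCurve) (h₃ : z₃ ∈ helixCurve) (h₄ : z₄ ∈ helixCurve) (h₁₂ : z₁ ≠ z₂)
    (h₃₄ : z₃ ≠ z₄) (h₁₃ : z₁ ≠ z₃) (h₂₄ : z₂ ≠ z₄) (e₁₂ : horizProj z₁ = horizProj z₂)
    (e₃₄ : horizProj z₃ = horizProj z₄) : ⟪z₁ - z₃, z₂ - z₄⟫ ≠ 0 := by
  have p₁ := horizProj_eq_one_of_horizProj_eq h₁ h₂ e₁₂ h₁₂
  have p₃ := horizProj_eq_one_of_horizProj_eq h₃ h₄ e₃₄ h₃₄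
  obtain ⟨b, rfl⟩ : ∃ b, z₂ = vseg b := ⟨_, eq_vseg_of_horizProj_eq_one (e₁₂ ▸ p₁)⟩
  obtain ⟨d, rfl⟩ : ∃ d, z₄ = vseg d := ⟨_, eq_vseg_of_horizProj_eq_one (e₃₄ ▸ p₃)⟩
  obtain ⟨a, rfl⟩ : ∃ a, z₁ = vseg a := ⟨_, eq_vseg_of_horizProj_eq_one p₁⟩
  obtain ⟨c, rfl⟩ : ∃ c, z₃ = vseg c := ⟨_, eq_vseg_of_horizProj_eq_one p₃⟩
  rw [inner_vseg_sub_vseg]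
  exact mul_ne_zero (sub_ne_zero.2 fun h => h₁₃ (h ▸ rfl)) (sub_ne_zero.2 fun h => h₂₄ (h ▸ rfl))

def SegmentAntipodes (z w : ℝ³) : Prop :=
  ∃ s, (z = vseg s ∧ w = helix π) ∨ (z = helix π ∧ w = vseg s)

def HelixAntipodes (z w : ℝ³) : Prop :=
  ∃ t, (z = helix t ∧ w = helix (t + π)) ∨ (z = helix (t + π) ∧ w = helix t)

theorem segmentAntipodes_or_helixAntipodes {z w : ℝ³} (hz : z ∈ helixCurve)
    (hw : w ∈ helixCurve) (h : horizProj z + horizProj w = 0) :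
    SegmentAntipodes z w ∨ HelixAntipodes z w := by
  rcases hz with ⟨a, ⟨ha₀, ha₁⟩, rfl⟩ | ⟨a, -, rfl⟩
  · rcases hw with ⟨b, ⟨hb₀, hb₁⟩, rfl⟩ | ⟨b, -, rfl⟩
    · right
      rcases le_total a b with hab | hba
      · exact ⟨a, Or.inl ⟨rfl, by
          rw [eq_add_pi_of_horizProj_helix_add_eq_zero hab (by linarith) h]⟩⟩
      · rw [add_comm] at h
        exact ⟨b, Or.inr ⟨by rw [eq_add_pi_of_horizProj_helix_add_eq_zero hba (by linarith) h],
          rfl⟩⟩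
    · exact Or.inl ⟨b, Or.inr ⟨eq_helix_pi_of_horizProj_eq_neg_one (Or.inl ⟨a, ⟨ha₀, ha₁⟩, rfl⟩)
        (by simpa [add_eq_zero_iff_eq_neg] using h), rfl⟩⟩
  · exact Or.inl ⟨a, Or.inl ⟨rfl, eq_helix_pi_of_horizProj_eq_neg_one hw
      (by simpa using eq_neg_of_add_eq_zero_right h)⟩⟩

theorem SegmentAntipodes.eq_helix_pi {z w : ℝ³} (h : SegmentAntipodes z w) :
    z = helix π ∨ w = helix π := by
  obtain ⟨s, ⟨-, rfl⟩ | ⟨rfl, -⟩⟩ := h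
  exacts [Or.inr rfl, Or.inl rfl]

theorem inner_helix_sub_helix_add_pi (t u : ℝ) :
    ⟪helix t - helix (t + π), helix u - helix (u + π)⟫ = 4 * cos (t - u) + π ^ 2 := by
  simp only [inner_fin_three, PiLp.sub_apply, helix, cos_add_pi, sin_add_pi, cos_sub,
    Matrix.cons_val]
  ring

theorem HelixAntipodes.inner_sub_ne_zero {a b c d : ℝ³} (hac : HelixAntipodes a c)
    (hbd : HelixAntipodes b d) : ⟪a - c, b - d⟫ ≠ 0 := by
  have hpos : ∀ t u, 0 < ⟪helix t - helix (t + π), helix u - helix (u + π)⟫ := fun t u => by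
    rw [inner_helix_sub_helix_add_pi]
    nlinarith [neg_one_le_cos (t - u), pi_gt_three]
  obtain ⟨t, ⟨rfl, rfl⟩ | ⟨rfl, rfl⟩⟩ := hac <;> obtain ⟨u, ⟨rfl, rfl⟩ | ⟨rfl, rfl⟩⟩ := hbd <;>
    simp only [ne_eq, ← neg_sub (helix t), ← neg_sub (helix u), inner_neg_left,
      inner_neg_right, neg_eq_zero, neg_neg] <;>
    exact (hpos t u).ne'

theorem eq_pi_and_eq_pi_div_two_of_vseg_helix {s t : ℝ}
    (hmid : vseg s + helix π = helix t + helix (t + π))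
    (hperp : ⟪vseg s - helix π, helix t - helix (t + π)⟫ = 0) : s = π ∧ t = π / 2 := by
  have hs : s = 2 * t := by
    linarith [show s + π = t + (t + π) by simpa [vseg, helix] using congrArg (· 2) hmid]
  have ht : t = π / 2 := by
    apply eq_pi_div_two_of_four_mul_cos_eq
    simp only [inner_fin_three, PiLp.sub_apply, vseg, helix, cos_add_pi, sin_add_pi, cos_pi,
      sin_pi, Matrix.cons_val] at hperp
    linear_combination hperp + π * hs
  exact ⟨by rw [hs, ht]; ring, ht⟩

theorem SegmentAntipodes.vertexSet_eq {a b c d : ℝ³} (hac : SegmentAntipodes a c)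
    (hbd : HelixAntipodes b d) (hmid : a + c = b + d) (hperp : ⟪a - c, b - d⟫ = 0) :
    ({a, b, c, d} : Set ℝ³) = {helix (π / 2), helix π, helix (π / 2 + π), vseg π} := by
  obtain ⟨s, ⟨rfl, rfl⟩ | ⟨rfl, rfl⟩⟩ := hac <;> obtain ⟨t, ⟨rfl, rfl⟩ | ⟨rfl, rfl⟩⟩ := hbd
  · obtain ⟨rfl, rfl⟩ := eq_pi_and_eq_pi_div_two_of_vseg_helix hmid hperp
    ext; simp only [Set.mem_insert_iff, Set.mem_singleton_iff]; tauto
  · obtain ⟨rfl, rfl⟩ := eq_pi_and_eq_pi_div_two_of_vseg_helix (by rw [hmid, add_comm])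
      (by rw [← neg_sub (helix (t + π)), inner_neg_right, hperp, neg_zero])
    ext; simp only [Set.mem_insert_iff, Set.mem_singleton_iff]; tauto
  · obtain ⟨rfl, rfl⟩ := eq_pi_and_eq_pi_div_two_of_vseg_helix (by rw [add_comm, hmid])
      (by rw [← neg_sub (helix π), inner_neg_left, hperp, neg_zero])
    ext; simp only [Set.mem_insert_iff, Set.mem_singleton_iff]; tauto
  · obtain ⟨rfl, rfl⟩ := eq_pi_and_eq_pi_div_two_of_vseg_helix (by rw [add_comm, hmid, add_comm])
      (by rw [← neg_sub (helix π), ← neg_sub (helix (t + π)), inner_neg_neg, hperp])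
    ext; simp only [Set.mem_insert_iff, Set.mem_singleton_iff]; tauto

theorem vertexSet_eq_of_isRhombus {z₁ z₂ z₃ z₄ : ℝ³} (h₁ : z₁ ∈ helixCurve)
    (h₂ : z₂ ∈ helixCurve) (h₃ : z₃ ∈ helixCurve) (h₄ : z₄ ∈ helixCurve)
    (hR : IsRhombus z₁ z₂ z₃ z₄) :
    ({z₁, z₂, z₃, z₄} : Set ℝ³) = {helix (π / 2), helix π, helix (π / 2 + π), vseg π} := by
  obtain ⟨h₁₂, h₁₃, h₁₄, h₂₃, h₂₄, h₃₄, hmid, hnorm⟩ := hR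
  have hperp := (norm_sub_eq_norm_sub_iff_inner_eq_zero hmid).1 hnorm
  have hmid' : horizProj z₁ + horizProj z₃ = horizProj z₂ + horizProj z₄ := by
    simpa only [horizProj_add] using congrArg horizProj hmid
  rcases Complex.add_eq_zero_or_of_add_eq_add (norm_horizProj_of_mem h₁)
    (norm_horizProj_of_mem h₂) (norm_horizProj_of_mem h₃) (norm_horizProj_of_mem h₄) hmid' with
    hσ | ⟨e₂₁, e₄₃⟩ | ⟨e₂₃, e₄₁⟩
  · rcases segmentAntipodes_or_helixAntipodes h₁ h₃ hσ with hac | hac <;>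
      rcases segmentAntipodes_or_helixAntipodes h₂ h₄ (hmid' ▸ hσ) with hbd | hbd
    · rcases hac.eq_helix_pi with rfl | rfl <;> rcases hbd.eq_helix_pi with rfl | rfl <;>
        contradiction
    · exact hac.vertexSet_eq hbd hmid hperp
    · rw [Set.insert_comm z₁, Set.pair_comm z₃]
      exact hbd.vertexSet_eq hac hmid.symm (by rwa [real_inner_comm])
    · exact absurd hperp (hac.inner_sub_ne_zero hbd)
  · exact absurd hperp
      (inner_sub_ne_zero_of_horizProj_eq h₁ h₂ h₃ h₄ h₁₂ h₃₄ h₁₃ h₂₄ e₂₁.symm e₄₃.symm)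
  · have := inner_sub_ne_zero_of_horizProj_eq h₁ h₄ h₃ h₂ h₁₄ h₂₃.symm h₁₃ h₂₄.symm
      e₄₁.symm e₂₃.symm
    rw [← neg_sub z₂, inner_neg_right, neg_ne_zero] at this
    exact absurd hperp this

theorem isRhombus_helix_vseg :
    IsRhombus (helix (π / 2)) (helix π) (helix (π / 2 + π)) (vseg π) := by
  have hmid : helix (π / 2) + helix (π / 2 + π) = helix π + vseg π := by
    have h : π / 2 + (π / 2 + π) = π + π := by ring
    ext i; fin_cases i <;> simp [helix, vseg, cos_add_pi, sin_add_pi, h]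
  have hperp : ⟪helix (π / 2) - helix (π / 2 + π), helix π - vseg π⟫ = 0 := by
    simp [inner_fin_three, helix, vseg]
  have hne : ∀ {x y : ℝ³}, horizProj x ≠ horizProj y → x ≠ y := fun h e => h (e ▸ rfl)
  refine ⟨hne ?_, hne ?_, hne ?_, hne ?_, hne ?_, hne ?_, hmid,
    (norm_sub_eq_norm_sub_iff_inner_eq_zero hmid).2 hperp⟩ <;>
    norm_num [Complex.ext_iff, cos_add_pi, sin_add_pi]

theorem helix_pi_div_two : helix (π / 2) = !₂[0, 1, π / 2] := by simp [helix]

theorem helix_pi : helix π = !₂[-1, 0, π] := by simp [helix]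

theorem helix_pi_div_two_add_pi : helix (π / 2 + π) = !₂[0, -1, 3 * π / 2] := by
  rw [helix, cos_add_pi, sin_add_pi, cos_pi_div_two, sin_pi_div_two, neg_zero]
  ring_nf

/-- The helix-plus-segment curve contains exactly one inscribed rhombus. -/
theorem helix_unique_rhombus :
    ((!₂[0, 1, π / 2] : EuclideanSpace ℝ (Fin 3)) ∈ helixCurve ∧
     (!₂[-1, 0, π] : EuclideanSpace ℝ (Fin 3)) ∈ helixCurve ∧
     (!₂[0, -1, 3 * π / 2] : EuclideanSpace ℝ (Fin 3)) ∈ helixCurve ∧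
     (!₂[1, 0, π] : EuclideanSpace ℝ (Fin 3)) ∈ helixCurve ∧
     IsRhombus !₂[0, 1, π / 2] !₂[-1, 0, π] !₂[0, -1, 3 * π / 2] !₂[1, 0, π]) ∧
    ∀ z₁ z₂ z₃ z₄ : EuclideanSpace ℝ (Fin 3),
      z₁ ∈ helixCurve → z₂ ∈ helixCurve → z₃ ∈ helixCurve → z₄ ∈ helixCurve →
      IsRhombus z₁ z₂ z₃ z₄ →
      ({z₁, z₂, z₃, z₄} : Set (EuclideanSpace ℝ (Fin 3))) =
        {(!₂[0, 1, π / 2] : EuclideanSpace ℝ (Fin 3)), !₂[-1, 0, π],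
         !₂[0, -1, 3 * π / 2], !₂[1, 0, π]} := by
  rw [← helix_pi_div_two, ← helix_pi, ← helix_pi_div_two_add_pi,
    ← show vseg π = !₂[1, 0, π] from rfl]
  have hπ := pi_pos
  exact ⟨⟨Or.inl ⟨π / 2, ⟨by positivity, by linarith⟩, rfl⟩,
    Or.inl ⟨π, ⟨hπ.le, by linarith⟩, rfl⟩, Or.inl ⟨π / 2 + π, ⟨by positivity, by linarith⟩, rfl⟩,
    Or.inr ⟨π, ⟨hπ.le, by linarith⟩, rfl⟩, isRhombus_helix_vseg⟩,
    fun _ _ _ _ => vertexSet_eq_of_isRhombus⟩
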